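/- arXiv:1907.02904 — 2 statements merged into one kernel-verified Lean document; each statement's English description precedes it below -/
import Mathlib

section
/- Let C and D be categories admitting all small colimits and let F : C → D be a functor. Then F preserves all small colimits if and only if F preserves finite coproducts and F preserves colimits indexed by small sifted categories. -/
/-!
STATEMENT 4: A functor between categories with all small colimits preserves all small colimits
iff it preserves finite coproducts and colimits indexed by small sifted categories.
-/

open CategoryTheory Limits

universe v u₁ u₂

namespace SiftedProofAux

open WalkingReflexivePair WalkingReflexivePair.Hom CategoryTheory.Limits.CoproductsFromFiniteFiltered

instance finalDiagWRP : Functor.Final (Functor.diag WalkingReflexivePair) := by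
  constructor
  rintro ⟨X, Y⟩
  have step : ∀ {Z Z' : WalkingReflexivePair} (f : ((X, Y) : WalkingReflexivePair × WalkingReflexivePair) ⟶ (Functor.diag _).obj Z)
      (φ : Z ⟶ Z') (p : Set (StructuredArrow ((X,Y) : WalkingReflexivePair × WalkingReflexivePair) (Functor.diag WalkingReflexivePair)))
      (h₂ : ∀ {j₁ j₂} (_ : j₁ ⟶ j₂), j₁ ∈ p ↔ j₂ ∈ p),
      (StructuredArrow.mk f ∈ p ↔ StructuredArrow.mk (f ≫ (Functor.diag _).map φ) ∈ p) :=
    fun f φ p h₂ => h₂ (StructuredArrow.homMk φ rfl)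
  cases X <;> cases Y
  · -- (zero, zero)
    refine IsConnected.of_induct
      (j₀ := StructuredArrow.mk ((𝟙 zero, 𝟙 zero) : ((zero,zero) : _ × _) ⟶ (Functor.diag _).obj zero)) ?_
    intro p h₁ h₂
    rintro ⟨⟨⟨⟩⟩, (_|_), ⟨f, g⟩⟩ <;> rcases f with _|_|_|_|_|_ <;> rcases g with _|_|_|_|_|_
    · exact h₁
    · exact (step (𝟙 (zero,zero)) reflexion p h₂).1 h₁
  · -- (zero, one)
    refine IsConnected.of_induct
      (j₀ := StructuredArrow.mk ((reflexion, 𝟙 one) : ((zero,one) : _ × _) ⟶ (Functor.diag _).obj one)) ?_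
    intro p h₁ h₂
    have hil : StructuredArrow.mk ((𝟙 zero, left) : ((zero,one) : _ × _) ⟶ (Functor.diag _).obj zero) ∈ p :=
      (step (reflexion, 𝟙 one) left p h₂).1 h₁
    have hir : StructuredArrow.mk ((𝟙 zero, right) : ((zero,one) : _ × _) ⟶ (Functor.diag _).obj zero) ∈ p :=
      (step (reflexion, 𝟙 one) right p h₂).1 h₁
    rintro ⟨⟨⟨⟩⟩, (_|_), ⟨f, g⟩⟩ <;> rcases f with _|_|_|_|_|_ <;> rcases g with _|_|_|_|_|_
    · exact hil
    · exact hir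
    · exact (step ((reflexion, leftCompReflexion)) left p h₂).2 hil
    · exact (step ((reflexion, rightCompReflexion)) left p h₂).2 hir
    · exact h₁
  · -- (one, zero)
    refine IsConnected.of_induct
      (j₀ := StructuredArrow.mk ((𝟙 one, reflexion) : ((one,zero) : _ × _) ⟶ (Functor.diag _).obj one)) ?_
    intro p h₁ h₂
    have hil : StructuredArrow.mk ((left, 𝟙 zero) : ((one,zero) : _ × _) ⟶ (Functor.diag _).obj zero) ∈ p :=
      (step (𝟙 one, reflexion) left p h₂).1 h₁
    have hir : StructuredArrow.mk ((right, 𝟙 zero) : ((one,zero) : _ × _) ⟶ (Functor.diag _).obj zero) ∈ p :=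
      (step (𝟙 one, reflexion) right p h₂).1 h₁
    rintro ⟨⟨⟨⟩⟩, (_|_), ⟨f, g⟩⟩ <;> rcases f with _|_|_|_|_|_ <;> rcases g with _|_|_|_|_|_
    · exact hil
    · exact hir
    · exact (step ((leftCompReflexion, reflexion)) left p h₂).2 hil
    · exact (step ((rightCompReflexion, reflexion)) left p h₂).2 hir
    · exact h₁
  · -- (one, one)
    refine IsConnected.of_induct
      (j₀ := StructuredArrow.mk ((𝟙 one, 𝟙 one) : ((one,one) : _ × _) ⟶ (Functor.diag _).obj one)) ?_
    intro p h₁ h₂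
    have hll : StructuredArrow.mk ((left, left) : ((one,one) : _ × _) ⟶ (Functor.diag _).obj zero) ∈ p :=
      (step (𝟙 (one,one)) left p h₂).1 h₁
    have hrr : StructuredArrow.mk ((right, right) : ((one,one) : _ × _) ⟶ (Functor.diag _).obj zero) ∈ p :=
      (step (𝟙 (one,one)) right p h₂).1 h₁
    have hidr : StructuredArrow.mk ((𝟙 one, rightCompReflexion) : ((one,one) : _ × _) ⟶ (Functor.diag _).obj one) ∈ p :=
      (step (𝟙 one, rightCompReflexion) right p h₂).2 hrr
    have hidl : StructuredArrow.mk ((𝟙 one, leftCompReflexion) : ((one,one) : _ × _) ⟶ (Functor.diag _).obj one) ∈ p :=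
      (step (𝟙 one, leftCompReflexion) left p h₂).2 hll
    have hlr : StructuredArrow.mk ((left, right) : ((one,one) : _ × _) ⟶ (Functor.diag _).obj zero) ∈ p :=
      (step (𝟙 one, rightCompReflexion) left p h₂).1 hidr
    have hrl : StructuredArrow.mk ((right, left) : ((one,one) : _ × _) ⟶ (Functor.diag _).obj zero) ∈ p :=
      (step (𝟙 one, leftCompReflexion) right p h₂).1 hidl
    rintro ⟨⟨⟨⟩⟩, (_|_), ⟨f, g⟩⟩ <;> rcases f with _|_|_|_|_|_ <;> rcases g with _|_|_|_|_|_
    · exact hll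
    · exact hlr
    · exact hrl
    · exact hrr
    · exact (step (leftCompReflexion, leftCompReflexion) left p h₂).2 hll
    · exact (step (leftCompReflexion, rightCompReflexion) left p h₂).2 hlr
    · exact (step (leftCompReflexion, 𝟙 one) left p h₂).2 hll
    · exact (step (rightCompReflexion, leftCompReflexion) left p h₂).2 hrl
    · exact (step (rightCompReflexion, rightCompReflexion) left p h₂).2 hrr
    · exact (step (rightCompReflexion, 𝟙 one) left p h₂).2 hrl
    · exact (step (𝟙 one, leftCompReflexion) left p h₂).2 hll
    · exact (step (𝟙 one, rightCompReflexion) left p h₂).2 hlr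
    · exact h₁

instance siftedWRP : IsSifted WalkingReflexivePair where
  nonempty := ⟨zero⟩


/-- Transfer a colimit cofork between parallel pairs with the same coequalizing condition. -/
noncomputable def coforkTransfer {C : Type u₁} [Category.{v} C] {X X' Y : C}
    {f g : X ⟶ Y} {f' g' : X' ⟶ Y}
    (cond : ∀ {Z : C} (x : Y ⟶ Z), (f ≫ x = g ≫ x) ↔ (f' ≫ x = g' ≫ x))
    {P : C} {π : Y ⟶ P} (w : f ≫ π = g ≫ π)
    (hc : IsColimit (Cofork.ofπ π w)) :
    IsColimit (Cofork.ofπ π ((cond π).mp w) : Cofork f' g') :=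
  Cofork.IsColimit.mk _
    (fun s => hc.desc (Cofork.ofπ s.π ((cond s.π).mpr s.condition)))
    (fun s => hc.fac _ WalkingParallelPair.one)
    (fun s m hm => by
      apply Cofork.IsColimit.hom_ext hc
      exact hm.trans (hc.fac (Cofork.ofπ s.π ((cond s.π).mpr s.condition)) WalkingParallelPair.one).symm)

variable {C : Type u₁} [Category.{v} C] {D : Type u₂} [Category.{v} D]
  [HasColimits C] (F : C ⥤ D) [PreservesFiniteCoproducts F]
  [PreservesColimitsOfShape WalkingReflexivePair F]

lemma preservesParallelPair {X Y : C} (f g : X ⟶ Y) :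
    PreservesColimit (parallelPair f g) F := by
  set h : X ⨿ Y ⟶ Y := coprod.desc f (𝟙 Y) with hh
  set k : X ⨿ Y ⟶ Y := coprod.desc g (𝟙 Y) with hk
  haveI : IsReflexivePair h k := IsReflexivePair.mk' coprod.inr (by rw [hh]; exact coprod.inr_desc _ _) (by rw [hk]; exact coprod.inr_desc _ _)
  haveI : PreservesColimit
      (WalkingParallelPair.inclusionWalkingReflexivePair ⋙ ofIsReflexivePair h k) F :=
    inferInstance
  haveI pphk : PreservesColimit (parallelPair h k) F :=
    preservesColimit_of_iso_diagram F (inclusionWalkingReflexivePairOfIsReflexivePairIso h k)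
  have condC : ∀ {Z : C} (x : Y ⟶ Z), (f ≫ x = g ≫ x) ↔ (h ≫ x = k ≫ x) := by
    intro Z x
    constructor
    · intro e
      apply coprod.hom_ext <;> simp [hh, hk, e]
    · intro e
      have := congrArg (fun t => coprod.inl ≫ t) e
      simpa [hh, hk, coprod.inl_desc] using this
  -- binary coproduct cofan image is colimit
  have hbc : IsColimit (BinaryCofan.mk (F.map (coprod.inl : X ⟶ X ⨿ Y)) (F.map coprod.inr)) := by
    exact isColimitOfHasBinaryCoproductOfPreservesColimit F X Y
  have condD : ∀ {Z : D} (x : F.obj Y ⟶ Z),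
      (F.map h ≫ x = F.map k ≫ x) ↔ (F.map f ≫ x = F.map g ≫ x) := by
    intro Z x
    constructor
    · intro e
      have := congrArg (fun t => F.map (coprod.inl : X ⟶ X ⨿ Y) ≫ t) e
      simp only [← Category.assoc, ← F.map_comp] at this
      simpa [hh, hk, ← F.map_comp_assoc, -Functor.map_comp, coprod.inl_desc] using this
    · intro e
      apply BinaryCofan.IsColimit.hom_ext hbc <;>
        simp only [BinaryCofan.mk_inl, BinaryCofan.mk_inr, ← Category.assoc, ← F.map_comp] <;>
        (erw [← F.map_comp_assoc, ← F.map_comp_assoc]; simp [hh, hk, e, coprod.inl_desc, coprod.inr_desc])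
  apply preservesColimit_of_preserves_colimit_cocone (coequalizerIsCoequalizer f g)
  have lc2 : IsColimit (Cofork.ofπ (coequalizer.π f g)
      ((condC _).mp (coequalizer.condition f g)) : Cofork h k) :=
    coforkTransfer condC _ (coequalizerIsCoequalizer f g)
  have lc3 := isColimitCoforkMapOfIsColimit F _ lc2
  have lc4 := coforkTransfer condD _ lc3
  exact (isColimitMapCoconeCoforkEquiv F (coequalizer.condition f g)).symm lc4


variable {C : Type u₁} [Category.{v} C] {D : Type u₂} [Category.{v} D]
  [HasColimits C] (F : C ⥤ D) [PreservesFiniteCoproducts F]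

omit [HasColimits C] in
lemma preservesFintypeCoproducts (β : Type v) [Fintype β] :
    PreservesColimitsOfShape (Discrete β) F :=
  preservesColimitsOfShape_of_equiv (Discrete.equivalence (Fintype.equivFin β).symm) F

lemma preservesDiscreteOfFinset (α : Type v)
    [PreservesColimitsOfShape (Finset (Discrete α)) F] :
    PreservesColimitsOfShape (Discrete α) F := by
  constructor
  intro G
  apply preservesColimit_of_preserves_colimit_cocone (liftToFinsetColimitCocone G).isColimit
  have hLc : IsColimit (F.mapCocone (colimit.cocone (liftToFinsetObj G))) :=
    isColimitOfPreserves F (colimit.isColimit (liftToFinsetObj G))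
  haveI : ∀ (J : Finset (Discrete α)), PreservesColimitsOfShape (Discrete (↥J)) F :=
    fun J => preservesFintypeCoproducts F _
  have hJ : ∀ (J : Finset (Discrete α)),
      IsColimit (Cofan.mk (F.obj (∐ fun x : J => G.obj x))
        (fun x : J => F.map (Sigma.ι (fun y : J => G.obj y) x))) :=
    fun J => isColimitOfHasCoproductOfPreservesColimit F _
  have e1 : ∀ (J J' : Finset (Discrete α)) (h : J ⟶ J') (x : J),
      Sigma.ι (fun y : J => G.obj y) x ≫ (liftToFinsetObj G).map h =
        Sigma.ι (fun y : J' => G.obj y) ⟨x.1, h.1.1 x.2⟩ := by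
    intro J J' h x
    simp [liftToFinsetObj]
  let cc : ∀ _ : Cocone (G ⋙ F), Cocone (liftToFinsetObj G ⋙ F) := fun s =>
    { pt := s.pt
      ι :=
        { app := fun J => (hJ J).desc (Cofan.mk s.pt fun x => s.ι.app x.1)
          naturality := by
            intro J J' h
            apply (hJ J).hom_ext
            rintro ⟨x⟩
            simp only [Cofan.mk_ι_app, Functor.comp_obj, Functor.comp_map,
              Functor.const_obj_obj, Functor.const_obj_map, Category.comp_id]
            erw [← Category.assoc, ← F.map_comp, e1 J J' h x, Category.comp_id]
            exact ((hJ J').fac (Cofan.mk s.pt fun x => s.ι.app x.1) ⟨(⟨x.1, h.1.1 x.2⟩ : J')⟩).trans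
              ((hJ J).fac (Cofan.mk s.pt fun x => s.ι.app x.1) ⟨x⟩).symm } }
  have ccfac : ∀ (s : Cocone (G ⋙ F)) (J : Finset (Discrete α)) (x : J),
      F.map (Sigma.ι (fun y : J => G.obj y) x) ≫ (cc s).ι.app J = s.ι.app x.1 :=
    fun s J x => (hJ J).fac (Cofan.mk s.pt fun x => s.ι.app x.1) ⟨x⟩
  have key : ∀ (J : Finset (Discrete α)) (x : J),
      Sigma.ι (fun y : J => G.obj y) x ≫ colimit.ι (liftToFinsetObj G) J =
        Sigma.ι (fun y : ({x.1} : Finset (Discrete α)) => G.obj y)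
            (⟨x.1, Finset.mem_singleton_self _⟩ : ({x.1} : Finset (Discrete α))) ≫
          colimit.ι (liftToFinsetObj G) {x.1} := by
    intro J x
    have hs : ({x.1} : Finset (Discrete α)) ⟶ J :=
      homOfLE (Finset.singleton_subset_iff.mpr x.2)
    rw [← colimit.w (liftToFinsetObj G) hs]; erw [← Category.assoc, e1 _ _ hs]; rfl
  refine ⟨fun s => hLc.desc (cc s), fun s j => ?_, fun s m hm => ?_⟩
  · -- fac
    have e0 : (F.mapCocone (liftToFinsetColimitCocone G).cocone).ι.app j =
        F.map (Sigma.ι (fun x : ({j} : Finset (Discrete α)) => G.obj x)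
            (⟨j, Finset.mem_singleton_self _⟩ : ({j} : Finset (Discrete α)))) ≫
          F.map (colimit.ι (liftToFinsetObj G) {j}) := by
      simp [liftToFinsetColimitCocone]; exact F.map_comp _ _
    erw [e0, Category.assoc]
    have e2 : F.map (colimit.ι (liftToFinsetObj G) {j}) ≫ hLc.desc (cc s) =
        (cc s).ι.app {j} := hLc.fac (cc s) {j}
    erw [e2]
    exact ccfac s {j} ⟨j, Finset.mem_singleton_self _⟩
  · -- uniq
    apply hLc.hom_ext
    intro J
    rw [hLc.fac (cc s) J]
    apply (hJ J).hom_ext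
    rintro ⟨x⟩
    simp only [Cofan.mk_ι_app]
    rw [ccfac s J x]
    simp only [Functor.mapCocone_ι_app, colimit.cocone_ι]
    erw [← Category.assoc, ← F.map_comp, key J x, F.map_comp, Category.assoc,
      ← Category.assoc, ← F.map_comp]
    exact hm x.1

end SiftedProofAux

open SiftedProofAux in
theorem preservesColimits_iff_finiteCoproducts_and_sifted
    {C : Type u₁} [Category.{v} C] {D : Type u₂} [Category.{v} D]
    [HasColimits C] [HasColimits D] (F : C ⥤ D) :
    PreservesColimits F ↔
      (PreservesFiniteCoproducts F ∧
        ∀ (J : Type v) (_ : SmallCategory J), IsSifted J → PreservesColimitsOfShape J F) := by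
  constructor
  · intro hF
    exact ⟨inferInstance, fun J _ _ => inferInstance⟩
  · rintro ⟨hfc, hs⟩
    -- reflexive coequalizers are sifted colimits
    haveI sWRP : IsSifted (AsSmall.{v} WalkingReflexivePair) :=
      IsSifted.isSifted_iff_asSmallIsSifted.mp inferInstance
    haveI : PreservesColimitsOfShape (AsSmall.{v} WalkingReflexivePair) F :=
      hs _ inferInstance sWRP
    haveI : PreservesColimitsOfShape WalkingReflexivePair F :=
      preservesColimitsOfShape_of_equiv (AsSmall.equiv (C := WalkingReflexivePair)).symm F
    haveI : PreservesColimitsOfShape WalkingParallelPair F := by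
      constructor
      intro K
      haveI := preservesParallelPair F (K.map WalkingParallelPairHom.left)
        (K.map WalkingParallelPairHom.right)
      exact preservesColimit_of_iso_diagram F (diagramIsoParallelPair K).symm
    haveI : ∀ (α : Type v), PreservesColimitsOfShape (Discrete α) F := by
      intro α
      letI := Classical.decEq (Discrete α)
      haveI : Nonempty (Finset (Discrete α)) := ⟨∅⟩
      haveI : IsSifted (Finset (Discrete α)) :=
        IsSifted.isSifted_of_hasBinaryCoproducts_and_nonempty
      haveI : PreservesColimitsOfShape (Finset (Discrete α)) F :=
        hs _ inferInstance this
      exact preservesDiscreteOfFinset F α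
    haveI : HasCoproducts.{v} C := fun _ => inferInstance
    exact preservesColimits_of_preservesCoequalizers_and_coproducts F
end

section
/- Let T be a triangulated category equipped with a t-structure (T≥0, T≤0). Then the heart T♡ = T≥0 ∩ T≤0 is an abelian category, in which a sequence 0 → A → B → C → 0 is short exact if and only if there is a distinguished triangle A → B → C → A[1] in T. -/
/-!
STATEMENT 8: The heart of a t-structure on a triangulated category is an abelian category,
in which a sequence `0 → A → B → C → 0` is short exact if and only if there is a distinguished
triangle `A → B → C → A[1]`.
-/

open CategoryTheory Limits Pretriangulated

universe v u

variable {T : Type u} [Category.{v} T] [Preadditive T] [HasZeroObject T] [HasShift T ℤ]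
  [∀ n : ℤ, (shiftFunctor T n).Additive] [Pretriangulated T]

/-- A t-structure on the triangulated category `T`, given by a pair of full subcategories
(i.e. predicates on objects, closed under isomorphism) `ge = T≥0` and `le = T≤0`. -/
structure IsTStructure (ge le : T → Prop) : Prop where
  ge_of_iso : ∀ {X Y : T}, (X ≅ Y) → ge X → ge Y
  le_of_iso : ∀ {X Y : T}, (X ≅ Y) → le X → le Y
  /-- `T≥0[1] ⊆ T≥0` -/
  ge_shift : ∀ X : T, ge X → ge (X⟦(1 : ℤ)⟧)
  /-- `T≤0 ⊆ T≤0[1]`, i.e. `X ∈ T≤0 → X[-1] ∈ T≤0` -/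
  le_shift : ∀ X : T, le X → le (X⟦(-1 : ℤ)⟧)
  /-- `Hom(A, B[-1]) = 0` for `A ∈ T≥0`, `B ∈ T≤0` -/
  hom_zero : ∀ {A B : T}, ge A → le B → ∀ f : A ⟶ B⟦(-1 : ℤ)⟧, f = 0
  /-- every object fits in a triangle `A → X → B → A[1]` with `A ∈ T≥0` and `B ∈ T≤0[-1]` -/
  exists_triangle : ∀ X : T, ∃ (A B : T) (f : A ⟶ X) (g : X ⟶ B) (h : B ⟶ A⟦(1 : ℤ)⟧),
    ge A ∧ le (B⟦(1 : ℤ)⟧) ∧ Triangle.mk f g h ∈ distTriang T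

/-- The heart `T♡ = T≥0 ∩ T≤0` of the pair of subcategories. -/
abbrev THeart (ge le : T → Prop) : Type u := ObjectProperty.FullSubcategory (fun X : T => ge X ∧ le X)

/-- The compatibility statement: a short complex `0 → A → B → C → 0` in the heart is short
exact if and only if there is a morphism `h : C ⟶ A[1]` making `A → B → C → A[1]` a
distinguished triangle in `T`. -/
def heartShortExactIffDistTriang (ge le : T → Prop) : Prop :=
  ∀ S : ShortComplex (THeart ge le),
    S.ShortExact ↔
      ∃ h : ((ObjectProperty.ι _).obj S.X₃ : T) ⟶
          ((ObjectProperty.ι _).obj S.X₁)⟦(1 : ℤ)⟧,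
        Triangle.mk ((ObjectProperty.ι _).map S.f)
          ((ObjectProperty.ι _).map S.g) h ∈ distTriang T

section Aux

variable {ge le : T → Prop} (t : IsTStructure ge le)

namespace IsTStructure

include t

lemma le_down {B : T} (hB : le (B⟦(1:ℤ)⟧)) : le B :=
  t.le_of_iso ((shiftEquiv T (1:ℤ)).unitIso.app B).symm (t.le_shift _ hB)

lemma zero₁ {A B : T} (hA : ge A) (hB : le B) (φ : A⟦(1:ℤ)⟧ ⟶ B) : φ = 0 := by
  have h1 : ((shiftEquiv T (1:ℤ)).unitIso.hom.app A ≫ (shiftFunctor T (-1:ℤ)).map φ) = 0 :=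
    t.hom_zero hA hB _
  have h2 : (shiftFunctor T (-1:ℤ)).map φ = 0 := by
    refine (cancel_epi ((shiftEquiv T (1:ℤ)).unitIso.hom.app A)).1 ?_
    exact h1.trans comp_zero.symm
  apply (shiftFunctor T (-1:ℤ)).map_injective
  rw [h2, Functor.map_zero]

lemma zero₀ {A B : T} (hA : ge A) (hB : le (B⟦(1:ℤ)⟧)) (φ : A ⟶ B) : φ = 0 := by
  have h1 : φ ≫ ((shiftEquiv T (1:ℤ)).unitIso.app B).hom = 0 := t.hom_zero hA hB _
  rw [← cancel_mono ((shiftEquiv T (1:ℤ)).unitIso.app B).hom, zero_comp]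
  exact h1

lemma zero₂ {A B : T} (hA : ge A) (hB : le B) (φ : A ⟶ (B⟦(-1:ℤ)⟧)⟦(-1:ℤ)⟧) : φ = 0 :=
  t.hom_zero hA (t.le_shift B hB) φ

/-- characterization of `T≥0` as a left orthogonal -/
lemma ge_of_forall {X : T} (hX : ∀ S : T, le (S⟦(1:ℤ)⟧) → ∀ f : X ⟶ S, f = 0) : ge X := by
  obtain ⟨A, B, a, g, h, hA, hB, mem⟩ := t.exists_triangle X
  have hg : g = 0 := hX B hB g
  have hB0 : IsZero B := by
    obtain ⟨ρ, hρ⟩ := Triangle.yoneda_exact₃ _ mem (𝟙 B) (by simp [hg]; exact zero_comp)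
    have hρ0 : ρ = 0 := t.zero₁ hA (t.le_down hB) ρ
    rw [IsZero.iff_id_eq_zero, hρ, hρ0, comp_zero]; rfl
  have : IsIso a := (Triangle.isZero₃_iff_isIso₁ _ mem).1 hB0
  exact t.ge_of_iso (asIso a) hA

/-- truncation triangle `A⟦1⟧ → X → B` with `A ∈ T≥0` (so `A⟦1⟧ ∈ T≥1`) and `B ∈ T≤0`. -/
lemma exists_triangle_one (X : T) :
    ∃ (A B : T) (f : A⟦(1:ℤ)⟧ ⟶ X) (g : X ⟶ B) (h : B ⟶ (A⟦(1:ℤ)⟧)⟦(1:ℤ)⟧),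
      ge A ∧ le B ∧ Triangle.mk f g h ∈ distTriang T := by
  obtain ⟨A, B', a, g, h, hA, hB', mem⟩ := t.exists_triangle (X⟦(-1:ℤ)⟧)
  let Tr := (Triangle.shiftFunctor T (1:ℤ)).obj (Triangle.mk a g h)
  let e := (shiftEquiv T (-1:ℤ)).unitIso.symm.app X
  have hTr' : Triangle.mk (Tr.mor₁ ≫ e.hom) (e.inv ≫ Tr.mor₂) Tr.mor₃ ∈ distTriang T := by
    refine isomorphic_distinguished _ (Triangle.shift_distinguished _ mem (1:ℤ)) _ ?_
    refine Triangle.isoMk _ _ (Iso.refl _) e.symm (Iso.refl _) ?_ ?_ ?_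
    · exact (Category.assoc _ _ _).trans ((congrArg (Tr.mor₁ ≫ ·) e.hom_inv_id).trans
        ((Category.comp_id _).trans (Category.id_comp _).symm))
    · exact Category.comp_id _
    · exact ((congrArg (Tr.mor₃ ≫ ·) ((shiftFunctor T (1:ℤ)).map_id _)).trans
        (Category.comp_id _)).trans (Category.id_comp _).symm
  exact ⟨A, B'⟦(1:ℤ)⟧, _, _, _, hA, hB', hTr'⟩

/-- characterization of `T≤0` as a right orthogonal -/
lemma le_of_forall {X : T} (hX : ∀ S : T, ge S → ∀ f : S⟦(1:ℤ)⟧ ⟶ X, f = 0) : le X := by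
  obtain ⟨A, B, a, g, h, hA, hB, mem⟩ := t.exists_triangle_one X
  have ha : a = 0 := hX A hA a
  have hA0 : IsZero (A⟦(1:ℤ)⟧) := by
    obtain ⟨w, hw⟩ := Triangle.coyoneda_exact₂ _ (inv_rot_of_distTriang _ mem)
      (𝟙 (A⟦(1:ℤ)⟧)) (by simp [ha]; exact comp_zero)
    have hw0 : w = 0 := t.hom_zero (t.ge_shift A hA) hB _
    rw [IsZero.iff_id_eq_zero, hw, hw0, zero_comp]; rfl
  have : IsIso (Triangle.mk a g h).mor₂ := (Triangle.isZero₁_iff_isIso₂ _ mem).1 hA0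
  exact t.le_of_iso (asIso (Triangle.mk a g h).mor₂).symm hB

/-- `T≥0` is closed under extensions -/
lemma ge_ext (Tr : Triangle T) (hTr : Tr ∈ distTriang T)
    (h₁ : ge Tr.obj₁) (h₃ : ge Tr.obj₃) : ge Tr.obj₂ := by
  refine t.ge_of_forall (fun S hS f => ?_)
  obtain ⟨f', hf'⟩ := Triangle.yoneda_exact₂ _ hTr f (t.zero₀ h₁ hS _)
  rw [hf', t.zero₀ h₃ hS f', comp_zero]

/-- `T≤0` is closed under extensions -/
lemma le_ext (Tr : Triangle T) (hTr : Tr ∈ distTriang T)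
    (h₁ : le Tr.obj₁) (h₃ : le Tr.obj₃) : le Tr.obj₂ := by
  refine t.le_of_forall (fun S hS f => ?_)
  obtain ⟨w, hw⟩ := Triangle.coyoneda_exact₂ _ hTr f (t.zero₁ hS h₃ _)
  rw [hw, t.zero₁ hS h₁ w, zero_comp]

open ZeroObject in
lemma ge_zero : ge (0 : T) :=
  t.ge_of_forall (fun S _ f => (Limits.isZero_zero T).eq_of_src f 0)

open ZeroObject in
lemma le_zero : le (0 : T) :=
  t.le_of_forall (fun S _ f => (Limits.isZero_zero T).eq_of_tgt f 0)

end IsTStructure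

end Aux
section Aux2

variable (ge le : T → Prop)

/-- kernel/cokernel data for a morphism between heart objects -/
structure KCData {X Y : T} (f : X ⟶ Y) where
  hX : ge X ∧ le X
  hY : ge Y ∧ le Y
  Z : T
  K : T
  Q : T
  g : Y ⟶ Z
  h : Z ⟶ X⟦(1:ℤ)⟧
  α : K⟦(1:ℤ)⟧ ⟶ Z
  π : Z ⟶ Q
  β : Q ⟶ (K⟦(1:ℤ)⟧)⟦(1:ℤ)⟧
  hK : ge K ∧ le K
  hQ : ge Q ∧ le Q
  mem₁ : Triangle.mk f g h ∈ distTriang T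
  mem₂ : Triangle.mk α π β ∈ distTriang T

variable {ge le}

namespace KCData

variable {X Y : T} {f : X ⟶ Y} (d : KCData ge le f)

/-- the cokernel projection -/
def ρ : Y ⟶ d.Q := d.g ≫ d.π

/-- `K ≅ K⟦1⟧⟦-1⟧` -/
def eK : d.K ≅ (d.K⟦(1:ℤ)⟧)⟦(-1:ℤ)⟧ := (shiftEquiv T (1:ℤ)).unitIso.app d.K

/-- the map `K⟦1⟧⟦-1⟧ ⟶ Z⟦-1⟧` -/
def ιZ : (d.K⟦(1:ℤ)⟧)⟦(-1:ℤ)⟧ ⟶ d.Z⟦(-1:ℤ)⟧ :=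
  ((Triangle.mk d.α d.π d.β).invRotate.invRotate.invRotate).mor₁

/-- the map `Z⟦-1⟧ ⟶ X` -/
def hι : d.Z⟦(-1:ℤ)⟧ ⟶ X := (Triangle.mk f d.g d.h).invRotate.mor₁

/-- the kernel inclusion -/
def ι : d.K ⟶ X := d.eK.hom ≫ d.ιZ ≫ d.hι

lemma hι_f : d.hι ≫ f = 0 :=
  comp_distTriang_mor_zero₁₂ _ (inv_rot_of_distTriang _ d.mem₁)

lemma ιZ_hι_f : d.ιZ ≫ d.hι ≫ f = 0 := by
  rw [d.hι_f, comp_zero]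

lemma ι_f : d.ι ≫ f = 0 := by
  rw [ι, Category.assoc, Category.assoc, d.hι_f, comp_zero, comp_zero]

lemma f_g : f ≫ d.g = 0 := comp_distTriang_mor_zero₁₂ _ d.mem₁

lemma f_ρ : f ≫ d.ρ = 0 := by
  rw [ρ, ← Category.assoc, d.f_g, zero_comp]

variable (t : IsTStructure ge le)
include t

lemma ker_fac {W : T} (hW : ge W ∧ le W) (φ : W ⟶ X) (hφ : φ ≫ f = 0) :
    ∃ φ' : W ⟶ d.K, φ = φ' ≫ d.ι := by
  obtain ⟨ω, hω⟩ := Triangle.coyoneda_exact₂ _ (inv_rot_of_distTriang _ d.mem₁) φ hφ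
  obtain ⟨φ'', hφ''⟩ := Triangle.coyoneda_exact₂ _
    (inv_rot_of_distTriang _ (inv_rot_of_distTriang _ (inv_rot_of_distTriang _ d.mem₂)))
    ω (t.hom_zero hW.1 d.hQ.2 _)
  let φ₀ : W ⟶ (d.K⟦(1:ℤ)⟧)⟦(-1:ℤ)⟧ := φ''
  refine ⟨φ₀ ≫ d.eK.inv, ?_⟩
  have key : φ = φ₀ ≫ d.ιZ ≫ d.hι := by rw [hω, hφ'']; exact Category.assoc _ _ _
  rw [key, ι]
  simp only [Category.assoc, Iso.inv_hom_id_assoc]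

lemma ker_uniq {W : T} (hW : ge W ∧ le W) (φ' : W ⟶ d.K) (hφ' : φ' ≫ d.ι = 0) : φ' = 0 := by
  have hω : ((φ' ≫ d.eK.hom) ≫ d.ιZ) ≫ d.hι = 0 := by
    simpa only [ι, Category.assoc] using hφ'
  obtain ⟨v, hv⟩ := Triangle.coyoneda_exact₂ _
    (inv_rot_of_distTriang _ (inv_rot_of_distTriang _ d.mem₁))
    ((φ' ≫ d.eK.hom) ≫ d.ιZ) hω
  have hv0 : v = 0 := t.hom_zero hW.1 d.hY.2 v
  have hZ : (φ' ≫ d.eK.hom) ≫ d.ιZ = 0 := by rw [hv0, zero_comp] at hv; exact hv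
  obtain ⟨u, hu⟩ := Triangle.coyoneda_exact₂ _
    (inv_rot_of_distTriang _ (inv_rot_of_distTriang _
      (inv_rot_of_distTriang _ (inv_rot_of_distTriang _ d.mem₂))))
    (φ' ≫ d.eK.hom) hZ
  have hu0 : u = 0 := t.zero₂ hW.1 d.hQ.2 u
  have : φ' ≫ d.eK.hom = 0 := by rw [hu0, zero_comp] at hu; exact hu
  rw [← cancel_mono d.eK.hom, zero_comp]
  exact this

lemma coker_fac {W : T} (hW : ge W ∧ le W) (ψ : Y ⟶ W) (hψ : f ≫ ψ = 0) :
    ∃ χ : d.Q ⟶ W, ψ = d.ρ ≫ χ := by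
  obtain ⟨φ, hφ⟩ := Triangle.yoneda_exact₂ _ d.mem₁ ψ hψ
  obtain ⟨χ, hχ⟩ := Triangle.yoneda_exact₂ _ d.mem₂ φ (t.zero₁ d.hK.1 hW.2 _)
  exact ⟨χ, by simp only [Triangle.mk_mor₂] at hφ hχ; rw [hφ, hχ, ρ]; exact (Category.assoc _ _ _).symm⟩

lemma coker_uniq {W : T} (hW : ge W ∧ le W) (χ : d.Q ⟶ W) (hχ : d.ρ ≫ χ = 0) : χ = 0 := by
  have h1 : d.g ≫ d.π ≫ χ = 0 := by simpa only [ρ, Category.assoc] using hχ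
  obtain ⟨ξ, hξ⟩ := Triangle.yoneda_exact₃ _ d.mem₁ (d.π ≫ χ) h1
  have hξ0 : ξ = 0 := t.zero₁ d.hX.1 hW.2 ξ
  have h2 : d.π ≫ χ = 0 := by rw [hξ0, comp_zero] at hξ; exact hξ
  obtain ⟨ξ', hξ'⟩ := Triangle.yoneda_exact₃ _ d.mem₂ χ h2
  have hξ'0 : ξ' = 0 := t.zero₁ (t.ge_shift _ d.hK.1) hW.2 ξ'
  rw [hξ'0, comp_zero] at hξ'; exact hξ'

end KCData

/-- every morphism between heart objects admits kernel/cokernel data -/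
lemma IsTStructure.exists_KCData (t : IsTStructure ge le) {X Y : T} (f : X ⟶ Y)
    (hX : ge X ∧ le X) (hY : ge Y ∧ le Y) : Nonempty (KCData ge le f) := by
  obtain ⟨Z, g, h, mem₁⟩ := distinguished_cocone_triangle f
  have hZge : ge Z := t.ge_ext _ (rot_of_distTriang _ mem₁) hY.1 (t.ge_shift X hX.1)
  have hZle1 : le (Z⟦(-1:ℤ)⟧) := t.le_ext _
    (inv_rot_of_distTriang _ (inv_rot_of_distTriang _ mem₁)) (t.le_shift Y hY.2) hX.2
  obtain ⟨K, Q, α, π, β, hKge, hQle, mem₂⟩ := t.exists_triangle_one Z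
  have hQge : ge Q := t.ge_ext _ (rot_of_distTriang _ mem₂) hZge
    (t.ge_shift _ (t.ge_shift _ hKge))
  have hKle : le K := by
    have h1 : le ((K⟦(1:ℤ)⟧)⟦(-1:ℤ)⟧) := t.le_ext _
      (inv_rot_of_distTriang _ (inv_rot_of_distTriang _ (inv_rot_of_distTriang _
        (inv_rot_of_distTriang _ mem₂))))
      (t.le_shift _ (t.le_shift _ hQle)) hZle1
    exact t.le_of_iso ((shiftEquiv T (1:ℤ)).unitIso.app K).symm h1
  exact ⟨⟨hX, hY, Z, K, Q, g, h, α, π, β, ⟨hKge, hKle⟩, ⟨hQge, hQle⟩, mem₁, mem₂⟩⟩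

end Aux2
section Aux3

open ZeroObject

lemma isZero_shift_of_isZero {A : T} (h : IsZero A) (n : ℤ) : IsZero (A⟦n⟧) := by
  rw [IsZero.iff_id_eq_zero] at h ⊢
  have := congrArg (shiftFunctor T n).map h
  rwa [CategoryTheory.Functor.map_id, CategoryTheory.Functor.map_zero] at this

variable {ge le : T → Prop} (t : IsTStructure ge le)
include t

lemma heart_hasZeroObject : HasZeroObject (THeart ge le) := by
  refine ⟨⟨0, t.ge_zero, t.le_zero⟩, ?_⟩
  rw [IsZero.iff_id_eq_zero]
  exact ObjectProperty.hom_ext _ ((isZero_zero T).eq_of_src _ _)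

lemma heart_hasBinaryProducts : HasBinaryProducts (THeart ge le) := by
  have : ∀ (A B : THeart ge le), HasLimit (pair A B) := by
    intro A B
    have hge : ge (A.obj ⊞ B.obj) :=
      t.ge_ext _ (binaryBiproductTriangle_distinguished A.obj B.obj) A.2.1 B.2.1
    have hle : le (A.obj ⊞ B.obj) :=
      t.le_ext _ (binaryBiproductTriangle_distinguished A.obj B.obj) A.2.2 B.2.2
    exact HasLimit.mk ⟨_, BinaryFan.isLimitMk
      (W := (⟨A.obj ⊞ B.obj, hge, hle⟩ : THeart ge le))
      (fst := ObjectProperty.homMk (biprod.fst : A.obj ⊞ B.obj ⟶ A.obj))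
      (snd := ObjectProperty.homMk (biprod.snd : A.obj ⊞ B.obj ⟶ B.obj))
      (fun s => ObjectProperty.homMk (biprod.lift (X := A.obj) (Y := B.obj) s.fst.hom s.snd.hom))
      (fun s => ObjectProperty.hom_ext _ (biprod.lift_fst _ _))
      (fun s => ObjectProperty.hom_ext _ (biprod.lift_snd _ _))
      (fun s m h1 h2 => ObjectProperty.hom_ext _ (biprod.hom_ext _ _
        ((congrArg InducedCategory.Hom.hom h1).trans (biprod.lift_fst _ _).symm)
        ((congrArg InducedCategory.Hom.hom h2).trans (biprod.lift_snd _ _).symm)))⟩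
  exact hasBinaryProducts_of_hasLimit_pair _

end Aux3

namespace KCData

section KC

open ZeroObject

variable {ge le : T → Prop}
variable {A B : THeart ge le} {f : A ⟶ B} (d : KCData ge le f.hom)

/-- the kernel as a heart object -/
def Kh : THeart ge le := ⟨d.K, d.hK⟩

/-- the cokernel as a heart object -/
def Qh : THeart ge le := ⟨d.Q, d.hQ⟩

/-- the kernel inclusion in the heart -/
def ιh : d.Kh ⟶ A := ObjectProperty.homMk d.ι

/-- the cokernel projection in the heart -/
def ρh : B ⟶ d.Qh := ObjectProperty.homMk d.ρ

lemma ιh_f : d.ιh ≫ f = 0 := ObjectProperty.hom_ext _ d.ι_f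

lemma f_ρh : f ≫ d.ρh = 0 := ObjectProperty.hom_ext _ d.f_ρ

variable (t : IsTStructure ge le)
include t

lemma ker_fac' {W : THeart ge le} (φ : W ⟶ A) (hφ : φ ≫ f = 0) :
    ∃ φ' : W ⟶ d.Kh, φ = φ' ≫ d.ιh := by
  obtain ⟨φ', h⟩ := d.ker_fac t W.2 φ.hom (congrArg InducedCategory.Hom.hom hφ)
  exact ⟨ObjectProperty.homMk φ', ObjectProperty.hom_ext _ h⟩

lemma ker_uniq' {W : THeart ge le} (φ' : W ⟶ d.Kh) (hφ' : φ' ≫ d.ιh = 0) : φ' = 0 :=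
  ObjectProperty.hom_ext _ (d.ker_uniq t W.2 φ'.hom (congrArg InducedCategory.Hom.hom hφ'))

lemma coker_fac' {W : THeart ge le} (ψ : B ⟶ W) (hψ : f ≫ ψ = 0) :
    ∃ χ : d.Qh ⟶ W, ψ = d.ρh ≫ χ := by
  obtain ⟨χ, h⟩ := d.coker_fac t W.2 ψ.hom (congrArg InducedCategory.Hom.hom hψ)
  exact ⟨ObjectProperty.homMk χ, ObjectProperty.hom_ext _ h⟩

lemma coker_uniq' {W : THeart ge le} (χ : d.Qh ⟶ W) (hχ : d.ρh ≫ χ = 0) : χ = 0 :=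
  ObjectProperty.hom_ext _ (d.coker_uniq t W.2 χ.hom (congrArg InducedCategory.Hom.hom hχ))

/-- the kernel fork in the heart is limiting -/
noncomputable def heartKernelIsLimit :
    IsLimit (KernelFork.ofι d.ιh d.ιh_f) := by
  refine KernelFork.IsLimit.ofι _ _
    (fun {W'} g' hg' => (d.ker_fac' t g' hg').choose)
    (fun {W'} g' hg' => ((d.ker_fac' t g' hg').choose_spec).symm)
    (fun {W'} g' hg' m hm => ?_)
  have h0 : (m - (d.ker_fac' t g' hg').choose) ≫ d.ιh = 0 := by
    rw [Preadditive.sub_comp, hm, ← (d.ker_fac' t g' hg').choose_spec, sub_self]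
  have := d.ker_uniq' t _ h0
  rwa [sub_eq_zero] at this

/-- the cokernel cofork in the heart is colimiting -/
noncomputable def heartCokernelIsColimit :
    IsColimit (CokernelCofork.ofπ d.ρh d.f_ρh) := by
  refine CokernelCofork.IsColimit.ofπ _ _
    (fun {W'} g' hg' => (d.coker_fac' t g' hg').choose)
    (fun {W'} g' hg' => ((d.coker_fac' t g' hg').choose_spec).symm)
    (fun {W'} g' hg' m hm => ?_)
  have h0 : d.ρh ≫ (m - (d.coker_fac' t g' hg').choose) = 0 := by
    rw [Preadditive.comp_sub, hm, ← (d.coker_fac' t g' hg').choose_spec, sub_self]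
  have := d.coker_uniq' t _ h0
  rwa [sub_eq_zero] at this

end KC

end KCData

section Aux4

open ZeroObject

variable {ge le : T → Prop} (t : IsTStructure ge le)
include t

lemma heart_hasKernels : HasKernels (THeart ge le) := by
  constructor
  intro A B f
  obtain ⟨d⟩ := t.exists_KCData f.hom A.2 B.2
  exact HasLimit.mk ⟨_, d.heartKernelIsLimit t⟩

lemma heart_hasCokernels : HasCokernels (THeart ge le) := by
  constructor
  intro A B f
  obtain ⟨d⟩ := t.exists_KCData f.hom A.2 B.2
  exact HasColimit.mk ⟨_, d.heartCokernelIsColimit t⟩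

end Aux4
section Aux5

open ZeroObject

variable {ge le : T → Prop} (t : IsTStructure ge le)

/-- every mono in the heart is normal -/
noncomputable def heart_normalMonoCategory : IsNormalMonoCategory (THeart ge le) where
  normalMonoOfMono {A B} f hm := by
    have d := (t.exists_KCData f.hom A.2 B.2).some
    have hι0 : d.ιh = 0 := by
      rw [← cancel_mono f, zero_comp]
      exact d.ιh_f
    have hK1 : 𝟙 d.Kh = 0 := d.ker_uniq' t (𝟙 d.Kh) (by rw [Category.id_comp, hι0])
    have hKz : IsZero d.K := by rw [IsZero.iff_id_eq_zero]; have := congrArg InducedCategory.Hom.hom hK1; exact this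
    have hK1z : IsZero (d.K⟦(1:ℤ)⟧) := isZero_shift_of_isZero hKz 1
    have hfac : ∀ (W : THeart ge le) (k : W.obj ⟶ B.obj), k ≫ d.ρ = 0 →
        ∃ ψ : W.obj ⟶ A.obj, k = ψ ≫ f.hom := by
      intro W k hk
      have h1 : (k ≫ d.g) ≫ d.π = 0 := by
        rw [Category.assoc]
        simpa only [KCData.ρ] using hk
      obtain ⟨w', hw'⟩ := Triangle.coyoneda_exact₂ _ d.mem₂ (k ≫ d.g) h1
      have hw0 : w' = 0 := hK1z.eq_of_tgt _ _
      have h2 : k ≫ d.g = 0 := by rw [hw0, zero_comp] at hw'; exact hw'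
      obtain ⟨ψ, hψ⟩ := Triangle.coyoneda_exact₂ _ d.mem₁ k h2
      exact ⟨ψ, hψ⟩
    exact ⟨
      { Z := d.Qh
        g := d.ρh
        w := d.f_ρh
        isLimit := KernelFork.IsLimit.ofι (f := d.ρh) _ _
          (fun {W} k hk => ObjectProperty.homMk
            (hfac W k.hom (congrArg InducedCategory.Hom.hom hk)).choose)
          (fun {W} k hk => ObjectProperty.hom_ext _
            ((hfac W k.hom (congrArg InducedCategory.Hom.hom hk)).choose_spec).symm)
          (fun {W} k hk m hmm => by
            rw [← cancel_mono f, hmm]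
            exact ObjectProperty.hom_ext _
              (hfac W k.hom (congrArg InducedCategory.Hom.hom hk)).choose_spec) }⟩

/-- every epi in the heart is normal -/
noncomputable def heart_normalEpiCategory : IsNormalEpiCategory (THeart ge le) where
  normalEpiOfEpi {A B} f he := by
    have d := (t.exists_KCData f.hom A.2 B.2).some
    have hρ0 : d.ρh = 0 := by
      rw [← cancel_epi f, comp_zero]
      exact d.f_ρh
    have hQ1 : 𝟙 d.Qh = 0 := d.coker_uniq' t (𝟙 d.Qh) (by rw [Category.comp_id, hρ0])
    have hQz : IsZero d.Q := by rw [IsZero.iff_id_eq_zero]; have := congrArg InducedCategory.Hom.hom hQ1; exact this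
    have hQmz : IsZero (d.Q⟦(-1:ℤ)⟧) := isZero_shift_of_isZero hQz (-1)
    have hfac : ∀ (W : THeart ge le) (k : A.obj ⟶ W.obj), d.ι ≫ k = 0 →
        ∃ χ : B.obj ⟶ W.obj, k = f.hom ≫ χ := by
      intro W k hk
      have h1 : d.ιZ ≫ d.hι ≫ k = 0 := by
        rw [← cancel_epi d.eK.hom, comp_zero]
        rw [show d.eK.hom ≫ d.ιZ ≫ d.hι ≫ k = d.ι ≫ k by
          simp only [KCData.ι, Category.assoc]]
        exact hk
      obtain ⟨χ', hχ'⟩ := Triangle.yoneda_exact₂ _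
        (inv_rot_of_distTriang _ (inv_rot_of_distTriang _ (inv_rot_of_distTriang _ d.mem₂)))
        (d.hι ≫ k) h1
      have hχ'0 : χ' = 0 := hQmz.eq_of_src _ _
      have h2 : d.hι ≫ k = 0 := by rw [hχ'0, comp_zero] at hχ'; exact hχ'
      obtain ⟨χ, hχ⟩ := Triangle.yoneda_exact₂ _ (inv_rot_of_distTriang _ d.mem₁) k h2
      exact ⟨χ, hχ⟩
    exact ⟨
      { W := d.Kh
        g := d.ιh
        w := d.ιh_f
        isColimit := CokernelCofork.IsColimit.ofπ (f := d.ιh) _ _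
          (fun {W} k hk => ObjectProperty.homMk
            (hfac W k.hom (congrArg InducedCategory.Hom.hom hk)).choose)
          (fun {W} k hk => ObjectProperty.hom_ext _
            ((hfac W k.hom (congrArg InducedCategory.Hom.hom hk)).choose_spec).symm)
          (fun {W} k hk m hmm => by
            rw [← cancel_epi f, hmm]
            exact ObjectProperty.hom_ext _
              (hfac W k.hom (congrArg InducedCategory.Hom.hom hk)).choose_spec) }⟩

/-- the heart of a t-structure is abelian -/
@[reducible]
noncomputable def heartAbelian : Abelian (THeart ge le) :=
  letI := heart_hasZeroObject t
  letI := heart_hasBinaryProducts t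
  letI := heart_hasKernels t
  letI := heart_hasCokernels t
  { toPreadditive := CategoryTheory.Preadditive.fullSubcategory _
    toIsNormalMonoCategory := heart_normalMonoCategory t
    toIsNormalEpiCategory := heart_normalEpiCategory t
    has_finite_products := hasFiniteProducts_of_has_binary_and_terminal
    has_kernels := heart_hasKernels t
    has_cokernels := heart_hasCokernels t }

lemma heartAbelian_toPreadditive :
    (heartAbelian t).toPreadditive = CategoryTheory.Preadditive.fullSubcategory _ := rfl

end Aux5
section Final

variable {ge' le' : T → Prop}

theorem heart_abelian' (ge le : T → Prop) (t : IsTStructure ge le) :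
    ∃ inst : Abelian (THeart ge le),
      inst.toPreadditive = CategoryTheory.Preadditive.fullSubcategory _ ∧
        heartShortExactIffDistTriang ge le := by
  letI inst : Abelian (THeart ge le) := heartAbelian t
  refine ⟨inst, rfl, fun S => ?_⟩
  constructor
  · -- short exact → distinguished triangle
    intro hS
    haveI := hS.mono_f
    haveI := hS.epi_g
    obtain ⟨d⟩ := t.exists_KCData S.f.hom S.X₁.2 S.X₂.2
    have hι0 : d.ιh = 0 := by
      rw [← cancel_mono S.f, zero_comp]
      exact d.ιh_f
    have hK1 : 𝟙 d.Kh = 0 := d.ker_uniq' t (𝟙 d.Kh) (by rw [Category.id_comp, hι0])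
    have hKz : IsZero d.K := by rw [IsZero.iff_id_eq_zero]; have := congrArg InducedCategory.Hom.hom hK1; exact this
    have hπ : IsIso d.π :=
      (Triangle.isZero₁_iff_isIso₂ _ d.mem₂).1 (isZero_shift_of_isZero hKz 1)
    have hZ : ge d.Z ∧ le d.Z :=
      ⟨t.ge_of_iso (asIso d.π).symm d.hQ.1, t.le_of_iso (asIso d.π).symm d.hQ.2⟩
    set Zh : THeart ge le := ⟨d.Z, hZ⟩ with hZh
    have hfg : S.f ≫ (ObjectProperty.homMk d.g : S.X₂ ⟶ Zh) = 0 := ObjectProperty.hom_ext _ d.f_g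
    have hcofac : ∀ (W : THeart ge le) (k : S.X₂.obj ⟶ W.obj),
        S.f.hom ≫ k = 0 → ∃ χ : d.Z ⟶ W.obj, k = d.g ≫ χ :=
      fun W k hk => Triangle.yoneda_exact₂ _ d.mem₁ k hk
    have hcouniq : ∀ (W : THeart ge le) (χ : d.Z ⟶ W.obj), d.g ≫ χ = 0 → χ = 0 := by
      intro W χ hχ
      obtain ⟨ξ, hξ⟩ := Triangle.yoneda_exact₃ _ d.mem₁ χ hχ
      rw [hξ, t.zero₁ S.X₁.2.1 W.2.2 ξ]; exact comp_zero
    have hepi : Epi (ObjectProperty.homMk d.g : S.X₂ ⟶ Zh) :=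
      Preadditive.epi_of_cancel_zero _ (fun {W} χ hχ => ObjectProperty.hom_ext _
        (hcouniq W χ.hom (congrArg InducedCategory.Hom.hom hχ)))
    have colim₁ : IsColimit (CokernelCofork.ofπ (ObjectProperty.homMk d.g : S.X₂ ⟶ Zh) hfg) :=
      CokernelCofork.IsColimit.ofπ _ _
        (fun {W} k hk => ObjectProperty.homMk
          (hcofac W k.hom (congrArg InducedCategory.Hom.hom hk)).choose)
        (fun {W} k hk => ObjectProperty.hom_ext _
          ((hcofac W k.hom (congrArg InducedCategory.Hom.hom hk)).choose_spec).symm)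
        (fun {W} k hk m hmm => by
          rw [← cancel_epi (ObjectProperty.homMk d.g : S.X₂ ⟶ Zh), hmm]
          exact ObjectProperty.hom_ext _
            (hcofac W k.hom (congrArg InducedCategory.Hom.hom hk)).choose_spec)
    have colim₂ : IsColimit (CokernelCofork.ofπ S.g S.zero) := hS.exact.gIsCokernel
    let e : Zh ≅ S.X₃ := colim₁.coconePointUniqueUpToIso colim₂
    have hcomm : (ObjectProperty.homMk d.g : S.X₂ ⟶ Zh) ≫ e.hom = S.g := by
      simpa using colim₁.comp_coconePointUniqueUpToIso_hom colim₂ WalkingParallelPair.one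
    have hcomm2 : S.g ≫ e.inv = (ObjectProperty.homMk d.g : S.X₂ ⟶ Zh) := by
      rw [← hcomm, Category.assoc, e.hom_inv_id, Category.comp_id]
    refine ⟨e.inv.hom ≫ d.h, ?_⟩
    refine isomorphic_distinguished _ d.mem₁ _ ?_
    refine Triangle.isoMk _ _ (Iso.refl _) (Iso.refl _)
      ((ObjectProperty.ι _).mapIso e.symm) ?_ ?_ ?_
    · dsimp
      exact (Category.comp_id _).trans (Category.id_comp _).symm
    · dsimp
      exact (congrArg InducedCategory.Hom.hom hcomm2).trans (Category.id_comp _).symm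
    · dsimp
      exact (congrArg (_ ≫ ·) ((shiftFunctor T (1:ℤ)).map_id _)).trans (Category.comp_id _)
  · -- distinguished triangle → short exact
    rintro ⟨hm, mem⟩
    have hmono : Mono S.f := by
      apply Preadditive.mono_of_cancel_zero
      intro W φ hφ
      obtain ⟨ω, hω⟩ := Triangle.coyoneda_exact₂ _ (inv_rot_of_distTriang _ mem)
        φ.hom (congrArg InducedCategory.Hom.hom hφ)
      have hω0 : ω = 0 := t.hom_zero W.2.1 S.X₃.2.2 ω
      have : φ.hom = 0 := by rw [hω0, zero_comp] at hω; exact hω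
      exact ObjectProperty.hom_ext _ this
    have hepi : Epi S.g := by
      apply Preadditive.epi_of_cancel_zero
      intro W ψ hψ
      obtain ⟨ξ, hξ⟩ := Triangle.yoneda_exact₃ _ mem ψ.hom (congrArg InducedCategory.Hom.hom hψ)
      have hξ0 : ξ = 0 := t.zero₁ S.X₁.2.1 W.2.2 ξ
      have : ψ.hom = 0 := by rw [hξ0, comp_zero] at hξ; exact hξ
      exact ObjectProperty.hom_ext _ this
    have hlift : ∀ (W : THeart ge le) (φ : W.obj ⟶ S.X₂.obj),
        φ ≫ S.g.hom = 0 →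
        ∃ ψ : W.obj ⟶ S.X₁.obj, φ = ψ ≫ S.f.hom :=
      fun W φ hφ => Triangle.coyoneda_exact₂ _ mem φ hφ
    have hexact : S.Exact := by
      apply ShortComplex.exact_of_f_is_kernel
      refine KernelFork.IsLimit.ofι (f := S.g) _ S.zero
        (fun {W} φ hφ => ObjectProperty.homMk
          (hlift W φ.hom (congrArg InducedCategory.Hom.hom hφ)).choose)
        (fun {W} φ hφ => ObjectProperty.hom_ext _
          ((hlift W φ.hom (congrArg InducedCategory.Hom.hom hφ)).choose_spec).symm)
        (fun {W} φ hφ m hmm => by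
          rw [← cancel_mono S.f, hmm]
          exact ObjectProperty.hom_ext _
            (hlift W φ.hom (congrArg InducedCategory.Hom.hom hφ)).choose_spec)
    exact ShortComplex.ShortExact.mk' hexact hmono hepi

end Final

theorem heart_abelian (ge le : T → Prop) (t : IsTStructure ge le) :
    ∃ inst : Abelian (THeart ge le),
      inst.toPreadditive = CategoryTheory.Preadditive.fullSubcategory _ ∧
        heartShortExactIffDistTriang ge le :=
  heart_abelian' ge le t
end
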